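/- arXiv:2111.07028 — 3 statements merged into one kernel-verified Lean document; each statement's English description precedes it below -/
import Mathlib

section
/- Let γ > 1 and let ρ : T³×[0,T] → [0,∞) and u : T³×[0,T] → ℝ³ be smooth functions satisfying ∂_tρ + div(ρu) = 0 pointwise, and set P(ρ) = ρ^γ. Then for every t ∈ (0,T): ∫_{T³} ∇(P(ρ) − 1) · (∂_t u + (u·∇)u) dx = − d/dt ∫_{T³} (P(ρ) − 1) div u dx + ∫_{T³} ( −ρ P'(ρ) (div u)² + P(ρ) ((div u)² − Σ_{i,j} ∂_j u^i ∂_i u^j) ) dx, where P'(ρ) = γ ρ^{γ−1}. -/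
/-!
We model functions on the flat torus `𝕋³ = (ℝ/ℤ)³` (unit volume) as `ℤ³`-periodic
functions on `ℝ³`, with integrals over the fundamental domain `T3 = [0,1]³`.
Time-dependent functions are defined on `ℝ³ × ℝ`.
-/

noncomputable section

open MeasureTheory Real Set

/-- Points of `ℝ³`. `ℤ³`-periodic functions on `ℝ³` model functions on the torus `𝕋³`. -/
abbrev Sp : Type := Fin 3 → ℝ

/-- The unit cube, a fundamental domain for the torus `𝕋³ = (ℝ/ℤ)³` (of unit volume). -/
def T3 : Set Sp := Set.Icc 0 1

/-- `ℤ³`-periodicity in space. -/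
def SpacePeriodic (f : Sp → ℝ) : Prop :=
  ∀ (x : Sp) (k : Fin 3 → ℤ), f (x + fun i => (k i : ℝ)) = f x

/-- Spatial partial derivative in the `i`-th coordinate direction. -/
def pd (i : Fin 3) (f : Sp → ℝ) (x : Sp) : ℝ :=
  fderiv ℝ f x (Pi.single i 1)

/-- Spatial divergence of a vector field. -/
def divergence (u : Sp → Fin 3 → ℝ) (x : Sp) : ℝ :=
  ∑ i, pd i (fun y => u y i) x

/-- Componentwise spatial Laplacian. -/
def lap (f : Sp → ℝ) (x : Sp) : ℝ :=
  ∑ i, pd i (pd i f) x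

/-- Time derivative of a time-dependent function at the point `(x, t)`. -/
def timeDeriv (f : Sp × ℝ → ℝ) (x : Sp) (t : ℝ) : ℝ :=
  deriv (fun s => f (x, s)) t

/-- `L²(𝕋³)` norm of a scalar function. -/
def L2f (f : Sp → ℝ) : ℝ := Real.sqrt (∫ x in T3, (f x) ^ 2)

/-- `L²(𝕋³)` norm of the Frobenius norm of the spatial Jacobian `∇u` of a vector field. -/
def L2grad (u : Sp → Fin 3 → ℝ) : ℝ :=
  Real.sqrt (∫ x in T3, ∑ i, ∑ j, (pd j (fun y => u y i) x) ^ 2)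

/-- A classical solution `(ρ, u)` of the isentropic compressible Navier–Stokes system
`∂ₜρ + div(ρu) = 0`, `∂ₜ(ρu) + div(ρu ⊗ u) + ∇(ρ^γ) = μΔu + (μ+λ)∇(div u)`
on the torus `𝕋³`, for times in the set `I`:  `ρ ≥ 0` and `u` are smooth and
`ℤ³`-periodic in space and satisfy the system pointwise for `t ∈ I`. -/
structure IsNSSol (μ lam γ : ℝ) (I : Set ℝ) (ρ : Sp × ℝ → ℝ) (u : Sp × ℝ → Fin 3 → ℝ) :
    Prop where
  smooth_rho : ContDiff ℝ (⊤ : ℕ∞) ρ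
  smooth_u : ContDiff ℝ (⊤ : ℕ∞) u
  periodic_rho : ∀ t : ℝ, SpacePeriodic fun x => ρ (x, t)
  periodic_u : ∀ (t : ℝ) (i : Fin 3), SpacePeriodic fun x => u (x, t) i
  rho_nonneg : ∀ p, 0 ≤ ρ p
  mass_eq : ∀ (x : Sp), ∀ t ∈ I,
    timeDeriv ρ x t + divergence (fun y i => ρ (y, t) * u (y, t) i) x = 0
  momentum_eq : ∀ (x : Sp), ∀ t ∈ I, ∀ i : Fin 3,
    timeDeriv (fun p => ρ p * u p i) x t
      + (∑ j, pd j (fun y => ρ (y, t) * u (y, t) j * u (y, t) i) x)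
      + pd i (fun y => ρ (y, t) ^ γ) x
    = μ * lap (fun y => u (y, t) i) x
      + (μ + lam) * pd i (fun y => divergence (fun z => u (z, t)) y) x

lemma HasFDerivAt.pd_eq {f : Sp → ℝ} {f' : Sp →L[ℝ] ℝ} {x : Sp} (h : HasFDerivAt f f' x)
    (i : Fin 3) : pd i f x = f' (Pi.single i 1) := by rw [pd, h.fderiv]

lemma continuous_pd {f : Sp → ℝ} (hf : ContDiff ℝ 1 f) (i : Fin 3) : Continuous (pd i f) := by
  have := (hf.continuous_fderiv one_ne_zero)
  exact this.clm_apply continuous_const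

lemma isCompact_T3 : IsCompact T3 := isCompact_Icc

lemma integrableOn_T3 {f : Sp → ℝ} (hf : Continuous f) : IntegrableOn f T3 :=
  hf.continuousOn.integrableOn_compact isCompact_T3

lemma integral_pd_eq_zero (i : Fin 3) (h : Sp → ℝ) (hd : Differentiable ℝ h) (hc : Continuous (pd i h))
    (hper : SpacePeriodic h) : ∫ x in T3, pd i h x = 0 := by
  have hle : (0 : Fin 3 → ℝ) ≤ 1 := fun j => by norm_num
  have key := integral_divergence_of_hasFDerivAt_off_countable (n := 2)
    (a := (0 : Fin 3 → ℝ)) (b := (1 : Fin 3 → ℝ)) hle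
    (fun x j => if j = i then h x else 0)
    (fun x => ContinuousLinearMap.pi fun j => if j = i then fderiv ℝ h x else 0)
    ∅ countable_empty
    (by
      apply Continuous.continuousOn
      apply continuous_pi
      intro j
      by_cases hj : j = i <;> simp [hj, hd.continuous, continuous_const])
    (by
      intro x _
      apply hasFDerivAt_pi.2
      intro j
      by_cases hj : j = i <;>
        simp only [hj, if_true, if_false, ContinuousLinearMap.proj_pi]
      · exact (hd x).hasFDerivAt
      · exact hasFDerivAt_const 0 x)
    (by
      have : (fun x : Sp => ∑ j, (ContinuousLinearMap.pi
          fun j => if j = i then fderiv ℝ h x else 0) (Pi.single j (1:ℝ)) j)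
          = fun x => pd i h x := by
        funext x
        simp only [ContinuousLinearMap.pi_apply]
        rw [Finset.sum_eq_single i]
        · simp [pd]
        · intro b _ hb; simp [hb]
        · simp
      rw [this]
      exact integrableOn_T3 hc)
  have e1 : (∫ x in Icc (0 : Fin 3 → ℝ) 1, ∑ j, (ContinuousLinearMap.pi
      fun j => if j = i then fderiv ℝ h x else 0) (Pi.single j (1:ℝ)) j)
      = ∫ x in T3, pd i h x := by
    rw [T3]
    apply setIntegral_congr_fun measurableSet_Icc
    intro x _
    simp only [ContinuousLinearMap.pi_apply]
    rw [Finset.sum_eq_single i]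
    · simp [pd]
    · intro b _ hb; simp [hb]
    · simp
  rw [e1] at key
  rw [key]
  apply Finset.sum_eq_zero
  intro j _
  by_cases hj : j = i
  · subst hj
    simp only [if_pos rfl]
    rw [sub_eq_zero]
    apply setIntegral_congr_fun measurableSet_Icc
    intro y _
    have hv : (Fin.insertNth j ((1 : Fin 3 → ℝ) j) y)
        = Fin.insertNth j ((0 : Fin 3 → ℝ) j) y + fun l => (((Pi.single j 1 : Fin 3 → ℤ) l : ℝ)) := by
      funext l
      rcases eq_or_ne l j with rfl | hl
      · simp
      · rcases Fin.exists_succAbove_eq hl with ⟨m, rfl⟩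
        simp [Pi.single_eq_of_ne (Fin.succAbove_ne j m)]
    simp only [if_true]
    rw [hv, hper]
  · simp [hj]

lemma SpacePeriodic.pd_per {f : Sp → ℝ} (hf : Differentiable ℝ f) (hper : SpacePeriodic f)
    (i : Fin 3) : SpacePeriodic (pd i f) := by
  intro x k
  have h1 : HasFDerivAt (fun y : Sp => y + fun l => ((k l : ℝ)))
      (ContinuousLinearMap.id ℝ Sp) x := (hasFDerivAt_id x).add_const _
  have h2 := ((hf _).hasFDerivAt).comp x h1
  have h3 : (f ∘ fun y : Sp => y + fun l => ((k l : ℝ))) = f := funext fun y => hper y k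
  rw [h3] at h2
  simp only [pd, h2.fderiv]
  rfl

lemma pd_mul {f g : Sp → ℝ} {x : Sp} (hf : DifferentiableAt ℝ f x) (hg : DifferentiableAt ℝ g x)
    (i : Fin 3) : pd i (fun y => f y * g y) x = pd i f x * g x + f x * pd i g x := by
  rw [HasFDerivAt.pd_eq (f := fun y => f y * g y) (hf.hasFDerivAt.mul' hg.hasFDerivAt)]
  simp [pd]
  ring

lemma pd_sub_const {f : Sp → ℝ} {x : Sp} (c : ℝ) (i : Fin 3) :
    pd i (fun y => f y - c) x = pd i f x := by
  unfold pd; rw [fderiv_sub_const]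

lemma pd_sum {ι : Type*} (s : Finset ι) (f : ι → Sp → ℝ) {x : Sp}
    (hf : ∀ j ∈ s, DifferentiableAt ℝ (f j) x) (i : Fin 3) :
    pd i (fun y => ∑ j ∈ s, f j y) x = ∑ j ∈ s, pd i (f j) x := by
  rw [show (fun y => ∑ j ∈ s, f j y) = ∑ j ∈ s, f j from by ext; simp,
    (HasFDerivAt.sum (fun j hj => (hf j hj).hasFDerivAt)).pd_eq]
  simp [pd]

lemma pd_rpow {f : Sp → ℝ} {x : Sp} {γ : ℝ} (hγ : 1 ≤ γ) (hf : DifferentiableAt ℝ f x)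
    (i : Fin 3) : pd i (fun y => f y ^ γ) x = γ * f x ^ (γ - 1) * pd i f x := by
  have h := (Real.hasDerivAt_rpow_const (x := f x) (p := γ) (Or.inr hγ)).comp_hasFDerivAt x
    hf.hasFDerivAt
  rw [show (fun y => f y ^ γ) = (fun z : ℝ => z ^ γ) ∘ f from rfl, h.pd_eq]
  simp [pd]

lemma ibp (i : Fin 3) (f g : Sp → ℝ) (hfd : Differentiable ℝ f) (hgd : Differentiable ℝ g)
    (hfc : Continuous (pd i f)) (hgc : Continuous (pd i g))
    (hfp : SpacePeriodic f) (hgp : SpacePeriodic g) :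
    ∫ x in T3, pd i f x * g x = - ∫ x in T3, f x * pd i g x := by
  have hpdmul : pd i (fun y => f y * g y) = fun x => pd i f x * g x + f x * pd i g x :=
    funext fun x => pd_mul (hfd x) (hgd x) i
  have h0 : ∫ x in T3, pd i (fun y => f y * g y) x = 0 := by
    apply integral_pd_eq_zero i (fun y => f y * g y) (hfd.mul hgd)
    · rw [hpdmul]
      exact (hfc.fun_mul hgd.continuous).fun_add (hfd.continuous.fun_mul hgc)
    · intro x k
      simp only [hfp x k, hgp x k]
  rw [hpdmul] at h0
  rw [integral_add (integrableOn_T3 (hfc.fun_mul hgd.continuous))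
    (integrableOn_T3 (hfd.continuous.fun_mul hgc))] at h0
  linarith

lemma hasFDerivAt_slice {g : Sp × ℝ → ℝ} {x : Sp} {t : ℝ}
    (hg : DifferentiableAt ℝ g (x, t)) :
    HasFDerivAt (fun y => g (y, t))
      ((fderiv ℝ g (x, t)).comp ((ContinuousLinearMap.id ℝ Sp).prod 0)) x :=
  hg.hasFDerivAt.comp x ((hasFDerivAt_id x).prodMk (hasFDerivAt_const t x))

lemma pd_slice {g : Sp × ℝ → ℝ} {x : Sp} {t : ℝ} (hg : DifferentiableAt ℝ g (x, t))
    (i : Fin 3) :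
    pd i (fun y => g (y, t)) x = fderiv ℝ g (x, t) (Pi.single i 1, 0) := by
  rw [(hasFDerivAt_slice hg).pd_eq]
  rfl

lemma timeDeriv_hasDerivAt {g : Sp × ℝ → ℝ} {x : Sp} {t : ℝ}
    (hg : DifferentiableAt ℝ g (x, t)) :
    HasDerivAt (fun s => g (x, s)) (fderiv ℝ g (x, t) (0, 1)) t := by
  have h := hg.hasFDerivAt.comp_hasDerivAt t ((hasDerivAt_const t x).prodMk (hasDerivAt_id t))
  simpa [Function.comp_def] using h

lemma timeDeriv_eq {g : Sp × ℝ → ℝ} {x : Sp} {t : ℝ} (hg : DifferentiableAt ℝ g (x, t)) :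
    timeDeriv g x t = fderiv ℝ g (x, t) (0, 1) := (timeDeriv_hasDerivAt hg).deriv

lemma fderiv_swap {E : Type*} [NormedAddCommGroup E] [NormedSpace ℝ E]
    (g : E → ℝ) (hg : ContDiff ℝ (⊤ : ℕ∞) g) (p v w : E) :
    fderiv ℝ (fun q => fderiv ℝ g q v) p w = fderiv ℝ (fun q => fderiv ℝ g q w) p v := by
  have hd : Differentiable ℝ (fderiv ℝ g) := (hg.fderiv_right (m := (⊤ : ℕ∞)) (by simp)).differentiable (by simp)
  have e : ∀ v w : E, fderiv ℝ (fun q => fderiv ℝ g q v) p w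
      = fderiv ℝ (fderiv ℝ g) p w v := by
    intro v w
    have hcomp : HasFDerivAt (fun q => fderiv ℝ g q v)
        ((ContinuousLinearMap.apply ℝ ℝ v).comp (fderiv ℝ (fderiv ℝ g) p)) p :=
      ((ContinuousLinearMap.apply ℝ ℝ v).hasFDerivAt).comp p (hd p).hasFDerivAt
    rw [hcomp.fderiv]
    rfl
  rw [e v w, e w v]
  exact second_derivative_symmetric (fun y => ((hg.differentiable (by simp)) y).hasFDerivAt)
    (hd p).hasFDerivAt w v

lemma hasDerivAt_integral_T3 (F F' : Sp × ℝ → ℝ) (hF : Continuous F) (hF' : Continuous F')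
    (hd : ∀ (x : Sp) (s : ℝ), HasDerivAt (fun s' => F (x, s')) (F' (x, s)) s) (t : ℝ) :
    HasDerivAt (fun s => ∫ x in T3, F (x, s)) (∫ x in T3, F' (x, t)) t := by
  obtain ⟨C, hC⟩ := (isCompact_T3.prod (isCompact_closedBall t 1)).exists_bound_of_continuousOn
    hF'.continuousOn
  have key := hasDerivAt_integral_of_dominated_loc_of_deriv_le (μ := volume.restrict T3)
    (F := fun s x => F (x, s)) (F' := fun s x => F' (x, s)) (x₀ := t)
    (bound := fun _ => |C|) (Metric.ball_mem_nhds t one_pos)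
    (Filter.Eventually.of_forall fun s =>
      ((hF.comp (continuous_id.prodMk continuous_const)).aestronglyMeasurable))
    (integrableOn_T3 (hF.comp (continuous_id.prodMk continuous_const)))
    ((hF'.comp (continuous_id.prodMk continuous_const)).aestronglyMeasurable)
    (by
      refine (ae_restrict_mem measurableSet_Icc).mono fun x hx => fun s hs => ?_
      calc ‖F' (x, s)‖ ≤ C := hC (x, s) ⟨hx, Metric.ball_subset_closedBall hs⟩
      _ ≤ |C| := le_abs_self C)
    (by
      exact integrableOn_const (μ := volume) (s := T3) isCompact_T3.measure_lt_top.ne)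
    (Filter.Eventually.of_forall fun x => fun s _ => hd x s)
  exact key.2

lemma pd_comm {f : Sp → ℝ} (hf : ContDiff ℝ (⊤ : ℕ∞) f) (i j : Fin 3) (x : Sp) :
    pd i (pd j f) x = pd j (pd i f) x := by
  calc pd i (pd j f) x
      = fderiv ℝ (fun y => fderiv ℝ f y (Pi.single j 1)) x (Pi.single i 1) := rfl
    _ = fderiv ℝ (fun y => fderiv ℝ f y (Pi.single i 1)) x (Pi.single j 1) :=
        fderiv_swap f hf x _ _
    _ = pd j (pd i f) x := rfl

lemma contDiff_pd {f : Sp → ℝ} (hf : ContDiff ℝ (⊤ : ℕ∞) f) (i : Fin 3) : ContDiff ℝ (⊤ : ℕ∞) (pd i f) :=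
  (hf.fderiv_right (by simp)).clm_apply contDiff_const

lemma t3_add (f g : Sp → ℝ) (hf : Continuous f) (hg : Continuous g) :
    ∫ x in T3, (f x + g x) = (∫ x in T3, f x) + ∫ x in T3, g x :=
  integral_add (integrableOn_T3 hf) (integrableOn_T3 hg)

lemma t3_sum (f : Fin 3 → Sp → ℝ) (hf : ∀ i, Continuous (f i)) :
    ∫ x in T3, (∑ i, f i x) = ∑ i, ∫ x in T3, f i x :=
  integral_finset_sum _ fun i _ => integrableOn_T3 (hf i)

lemma t3_congr {f g : Sp → ℝ} (h : ∀ x, f x = g x) :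
    ∫ x in T3, f x = ∫ x in T3, g x := by
  congr 1
  exact funext h

theorem core (γ : ℝ) (hγ : 1 < γ) (t : ℝ)
    (ρ : Sp × ℝ → ℝ) (u : Sp × ℝ → Fin 3 → ℝ)
    (hρ : ContDiff ℝ (⊤ : ℕ∞) ρ) (hu : ContDiff ℝ (⊤ : ℕ∞) u)
    (hρper : ∀ t : ℝ, SpacePeriodic fun x => ρ (x, t))
    (huper : ∀ (t : ℝ) (i : Fin 3), SpacePeriodic fun x => u (x, t) i)
    (hmass : ∀ (x : Sp),
      timeDeriv ρ x t + divergence (fun y i => ρ (y, t) * u (y, t) i) x = 0) :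
    (∫ x in T3, ∑ i, pd i (fun y => ρ (y, t) ^ γ - 1) x *
        (timeDeriv (fun p => u p i) x t + ∑ j, u (x, t) j * pd j (fun y => u (y, t) i) x))
    = -(deriv (fun s => ∫ x in T3,
          (ρ (x, s) ^ γ - 1) * divergence (fun y => u (y, s)) x) t)
      + ∫ x in T3,
          (-(ρ (x, t) * (γ * ρ (x, t) ^ (γ - 1))) * (divergence (fun y => u (y, t)) x) ^ 2
            + ρ (x, t) ^ γ * ((divergence (fun y => u (y, t)) x) ^ 2
              - ∑ i, ∑ j, pd j (fun y => u (y, t) i) x * pd i (fun y => u (y, t) j) x)) := by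
  have hγ0 : (0:ℝ) ≤ γ := by linarith
  have hγ1 : (0:ℝ) ≤ γ - 1 := by linarith
  -- smoothness basics
  have hud : ∀ i, ContDiff ℝ (⊤ : ℕ∞) fun p => u p i := fun i => contDiff_pi.1 hu i
  have hU : ∀ i, ContDiff ℝ (⊤ : ℕ∞) fun y => u (y, t) i :=
    fun i => (hud i).comp (contDiff_id.prodMk contDiff_const)
  have hR : ContDiff ℝ (⊤ : ℕ∞) fun y => ρ (y, t) := hρ.comp (contDiff_id.prodMk contDiff_const)
  have hRd : Differentiable ℝ fun y => ρ (y, t) := hR.differentiable (by simp)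
  have hUdiff : ∀ i, Differentiable ℝ fun y => u (y, t) i :=
    fun i => (hU i).differentiable (by simp)
  have hPd : Differentiable ℝ fun y => ρ (y, t) ^ γ := fun x =>
    show DifferentiableAt ℝ ((fun z : ℝ => z ^ γ) ∘ fun y => ρ (y, t)) x from ((Real.hasDerivAt_rpow_const (x := ρ (x, t)) (p := γ)
      (Or.inr hγ.le)).comp_hasFDerivAt x (hRd x).hasFDerivAt).differentiableAt
  have hpdP : ∀ (i : Fin 3) (x : Sp), pd i (fun y => ρ (y, t) ^ γ) x
      = γ * ρ (x, t) ^ (γ - 1) * pd i (fun y => ρ (y, t)) x :=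
    fun i x => pd_rpow hγ.le (hRd x) i
  have hpdPc : ∀ i : Fin 3, Continuous (pd i fun y => ρ (y, t) ^ γ) := by
    intro i
    have h : (pd i fun y => ρ (y, t) ^ γ)
        = fun x => γ * ρ (x, t) ^ (γ - 1) * pd i (fun y => ρ (y, t)) x := funext (hpdP i)
    rw [h]
    exact (continuous_const.fun_mul ((Real.continuous_rpow_const hγ1).comp
      hR.continuous)).fun_mul (continuous_pd (hR.of_le (by simp)) i)
  have hPc : Continuous fun y => ρ (y, t) ^ γ :=
    (Real.continuous_rpow_const hγ0).comp hR.continuous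
  have hpdUc : ∀ i j : Fin 3, Continuous (pd j fun y => u (y, t) i) :=
    fun i j => continuous_pd ((hU i).of_le (by simp)) j
  have hpdUs : ∀ i j : Fin 3, ContDiff ℝ (⊤ : ℕ∞) (pd j fun y => u (y, t) i) :=
    fun i j => contDiff_pd (hU i) j
  have hdvg : divergence (fun y => u (y, t)) = fun x => ∑ i, pd i (fun y => u (y, t) i) x :=
    rfl
  have hdvgs : ContDiff ℝ (⊤ : ℕ∞) (divergence fun y => u (y, t)) := by
    rw [hdvg]; exact ContDiff.sum fun i _ => hpdUs i i
  have hdvgc : Continuous (divergence fun y => u (y, t)) := hdvgs.continuous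
  have hpddvgc : ∀ j : Fin 3, Continuous (pd j (divergence fun y => u (y, t))) :=
    fun j => continuous_pd (hdvgs.of_le (by simp)) j
  -- periodicity
  have hRperT : SpacePeriodic fun y => ρ (y, t) := hρper t
  have hUperT : ∀ i, SpacePeriodic fun y => u (y, t) i := huper t
  have hPper : SpacePeriodic fun y => ρ (y, t) ^ γ := fun x k => by
    simpa using congrArg (· ^ γ) (hρper t x k)
  have hpdUper : ∀ i j, SpacePeriodic (pd j fun y => u (y, t) i) :=
    fun i j => SpacePeriodic.pd_per (hUdiff i) (hUperT i) j
  have hdvgper : SpacePeriodic (divergence fun y => u (y, t)) := by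
    rw [hdvg]
    intro x k
    exact Finset.sum_congr rfl fun i _ => hpdUper i i x k
  -- time derivative of u components, as slices
  have htdu_eq : ∀ i, (fun x => timeDeriv (fun p => u p i) x t)
      = fun x => fderiv ℝ (fun p => u p i) (x, t) ((0 : Sp), (1 : ℝ)) :=
    fun i => funext fun x => timeDeriv_eq ((hud i).differentiable (by simp)).differentiableAt
  have hGs : ∀ i, ContDiff ℝ (⊤ : ℕ∞) fun p : Sp × ℝ => fderiv ℝ (fun q => u q i) p ((0 : Sp), (1 : ℝ)) :=
    fun i => ((hud i).fderiv_right (by simp)).clm_apply contDiff_const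
  have htdus : ∀ i, ContDiff ℝ (⊤ : ℕ∞) fun x => timeDeriv (fun p => u p i) x t := by
    intro i
    rw [htdu_eq i]
    exact (hGs i).comp (contDiff_id.prodMk contDiff_const)
  have htduper : ∀ i, SpacePeriodic fun x => timeDeriv (fun p => u p i) x t := by
    intro i x k
    have h : (fun s => u (x + (fun l => (k l : ℝ)), s) i) = fun s => u (x, s) i :=
      funext fun s => huper s i x k
    simp only [timeDeriv, h]
  have htduc : ∀ i, Continuous fun x => timeDeriv (fun p => u p i) x t :=
    fun i => (htdus i).continuous
  have hpdtduc : ∀ i : Fin 3, Continuous (pd i fun x => timeDeriv (fun p => u p i) x t) :=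
    fun i => continuous_pd ((htdus i).of_le (by simp)) i
  have hinner : ∀ (i : Fin 3) (v : Sp × ℝ),
      ContDiff ℝ (⊤ : ℕ∞) fun q : Sp × ℝ => fderiv ℝ (fun p => u p i) q v :=
    fun i v => ((hud i).fderiv_right (by simp)).clm_apply contDiff_const
  have houter : ∀ (i : Fin 3) (v w : Sp × ℝ),
      Continuous fun q : Sp × ℝ => fderiv ℝ (fun p => fderiv ℝ (fun p' => u p' i) p v) q w :=
    fun i v w => ContDiff.continuous (n := ((⊤ : ℕ∞) : WithTop ℕ∞))
      (((hinner i v).fderiv_right (by simp)).clm_apply contDiff_const)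
  have hρtc : Continuous fun p : Sp × ℝ => fderiv ℝ ρ p ((0 : Sp), (1 : ℝ)) :=
    ContDiff.continuous (n := ((⊤ : ℕ∞) : WithTop ℕ∞))
      ((hρ.fderiv_right (by simp)).clm_apply contDiff_const)
  have hSd : ∀ (i : Fin 3) (x : Sp), pd i (fun y => timeDeriv (fun p => u p i) y t) x
      = fderiv ℝ (fun q => fderiv ℝ (fun p => u p i) q ((Pi.single i 1 : Sp), (0 : ℝ)))
          (x, t) ((0 : Sp), (1 : ℝ)) := by
    intro i x
    rw [htdu_eq i, pd_slice ((hinner i _).differentiable (by simp)).differentiableAt i]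
    exact fderiv_swap _ (hud i) _ _ _
  have htdρ_eq : (fun x => timeDeriv ρ x t)
      = fun x => fderiv ℝ ρ (x, t) ((0 : Sp), (1 : ℝ)) :=
    funext fun x => timeDeriv_eq (hρ.differentiable (by simp)).differentiableAt
  have htdρc : Continuous fun x => timeDeriv ρ x t := by
    rw [htdρ_eq]
    exact hρtc.comp (continuous_id.prodMk continuous_const)
  have hmass' : ∀ x : Sp, timeDeriv ρ x t
      = -∑ j, (pd j (fun y => ρ (y, t)) x * u (x, t) j
          + ρ (x, t) * pd j (fun y => u (y, t) j) x) := by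
    intro x
    have h0 := hmass x
    simp only [divergence] at h0
    have h1 : ∀ j : Fin 3, pd j (fun y => ρ (y, t) * u (y, t) j) x
        = pd j (fun y => ρ (y, t)) x * u (x, t) j + ρ (x, t) * pd j (fun y => u (y, t) j) x :=
      fun j => pd_mul (hRd x) (hUdiff j x) j
    rw [Finset.sum_congr rfl (fun j _ => h1 j)] at h0
    linarith
  -- parametric integral: the time derivative term
  set F : Sp × ℝ → ℝ := fun p => (ρ p ^ γ - 1) *
    (∑ i, fderiv ℝ (fun q => u q i) p ((Pi.single i 1 : Sp), (0 : ℝ))) with hF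
  set F' : Sp × ℝ → ℝ := fun p =>
    (γ * ρ p ^ (γ - 1) * fderiv ℝ ρ p ((0 : Sp), (1 : ℝ))) *
      (∑ i, fderiv ℝ (fun q => u q i) p ((Pi.single i 1 : Sp), (0 : ℝ)))
    + (ρ p ^ γ - 1) *
      (∑ i, fderiv ℝ (fun q => fderiv ℝ (fun p' => u p' i) q ((Pi.single i 1 : Sp), (0 : ℝ)))
        p ((0 : Sp), (1 : ℝ))) with hF'
  have hFc : Continuous F := by
    rw [hF]
    exact (((Real.continuous_rpow_const hγ0).comp hρ.continuous).fun_sub continuous_const).fun_mul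
      (continuous_finset_sum _ fun i _ => (hinner i _).continuous)
  have hF'c : Continuous F' := by
    rw [hF']
    exact (((continuous_const.fun_mul ((Real.continuous_rpow_const hγ1).comp hρ.continuous)).fun_mul
        hρtc).fun_mul (continuous_finset_sum _ fun i _ => (hinner i _).continuous)).fun_add
      ((((Real.continuous_rpow_const hγ0).comp hρ.continuous).fun_sub continuous_const).fun_mul
        (continuous_finset_sum _ fun i _ => houter i _ _))
  have hder : ∀ (x : Sp) (s : ℝ), HasDerivAt (fun s' => F (x, s')) (F' (x, s)) s := by
    intro x s
    have hrho : HasDerivAt (fun s' => ρ (x, s')) (fderiv ℝ ρ (x, s) ((0 : Sp), (1 : ℝ))) s :=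
      timeDeriv_hasDerivAt (hρ.differentiable (by simp)).differentiableAt
    have h1 : HasDerivAt (fun s' => ρ (x, s') ^ γ - 1)
        (γ * ρ (x, s) ^ (γ - 1) * fderiv ℝ ρ (x, s) ((0 : Sp), (1 : ℝ))) s := by
      have h := (Real.hasDerivAt_rpow_const (x := ρ (x, s)) (p := γ) (Or.inr hγ.le)).comp s hrho
      simpa using h.sub_const 1
    have h2 : HasDerivAt
        (fun s' => ∑ i, fderiv ℝ (fun q => u q i) (x, s') ((Pi.single i 1 : Sp), (0 : ℝ)))
        (∑ i, fderiv ℝ (fun q => fderiv ℝ (fun p' => u p' i) q ((Pi.single i 1 : Sp), (0 : ℝ)))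
          (x, s) ((0 : Sp), (1 : ℝ))) s :=
      HasDerivAt.fun_sum fun i _ =>
        timeDeriv_hasDerivAt ((hinner i _).differentiable (by simp)).differentiableAt
    simp only [hF, hF']
    exact h1.mul h2
  have hIeq : (fun s => ∫ x in T3, (ρ (x, s) ^ γ - 1) * divergence (fun y => u (y, s)) x)
      = fun s => ∫ x in T3, F (x, s) := by
    funext s
    refine t3_congr fun x => ?_
    simp only [hF, divergence]
    congr 1
    exact Finset.sum_congr rfl fun i _ =>
      pd_slice ((hud i).differentiable (by simp)).differentiableAt i
  have hderiv_eq : deriv (fun s => ∫ x in T3,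
      (ρ (x, s) ^ γ - 1) * divergence (fun y => u (y, s)) x) t = ∫ x in T3, F' (x, t) := by
    rw [hIeq]
    exact (hasDerivAt_integral_T3 F F' hFc hF'c hder t).deriv
  have hUcont : ∀ i, Continuous fun x => u (x, t) i := fun i => (hU i).continuous
  -- q2 : split the integral of F' at time t
  have hABc1 : Continuous fun x =>
      (γ * ρ (x, t) ^ (γ - 1) * timeDeriv ρ x t) * divergence (fun y => u (y, t)) x :=
    ((continuous_const.fun_mul ((Real.continuous_rpow_const hγ1).comp hR.continuous)).fun_mul
      htdρc).fun_mul hdvgc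
  have hABc2 : Continuous fun x =>
      (ρ (x, t) ^ γ - 1) * ∑ i, pd i (fun y => timeDeriv (fun p => u p i) y t) x :=
    (hPc.fun_sub continuous_const).fun_mul (continuous_finset_sum _ fun i _ => hpdtduc i)
  have hq2 : (∫ x in T3, F' (x, t)) =
      (∫ x in T3, (γ * ρ (x, t) ^ (γ - 1) * timeDeriv ρ x t) * divergence (fun y => u (y, t)) x)
      + ∫ x in T3, (ρ (x, t) ^ γ - 1) *
          ∑ i, pd i (fun y => timeDeriv (fun p => u p i) y t) x := by
    rw [← t3_add _ _ hABc1 hABc2]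
    refine t3_congr fun x => ?_
    have e1 : divergence (fun y => u (y, t)) x
        = ∑ i, fderiv ℝ (fun q => u q i) (x, t) ((Pi.single i 1 : Sp), (0 : ℝ)) := by
      rw [divergence]
      exact Finset.sum_congr rfl fun i _ =>
        pd_slice ((hud i).differentiable (by simp)).differentiableAt i
    have e2 : timeDeriv ρ x t = fderiv ℝ ρ (x, t) ((0 : Sp), (1 : ℝ)) :=
      timeDeriv_eq (hρ.differentiable (by simp)).differentiableAt
    have e3 : ∑ i, pd i (fun y => timeDeriv (fun p => u p i) y t) x
        = ∑ i, fderiv ℝ (fun q => fderiv ℝ (fun p' => u p' i) q ((Pi.single i 1 : Sp), (0 : ℝ)))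
            (x, t) ((0 : Sp), (1 : ℝ)) :=
      Finset.sum_congr rfl fun i _ => hSd i x
    rw [e1, e2, e3, hF']
  -- q1 : integration by parts in the time-derivative term
  have hq1 : (∫ x in T3, ∑ i, pd i (fun y => ρ (y, t) ^ γ) x * timeDeriv (fun p => u p i) x t)
      = -∫ x in T3, (ρ (x, t) ^ γ - 1) *
          ∑ i, pd i (fun y => timeDeriv (fun p => u p i) y t) x := by
    rw [t3_sum _ (fun i => (hpdPc i).fun_mul (htduc i))]
    have step : ∀ i : Fin 3,
        (∫ x in T3, pd i (fun y => ρ (y, t) ^ γ) x * timeDeriv (fun p => u p i) x t)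
        = -∫ x in T3, (ρ (x, t) ^ γ - 1) *
            pd i (fun y => timeDeriv (fun p => u p i) y t) x := by
      intro i
      have hsub : pd i (fun y => ρ (y, t) ^ γ - 1) = pd i (fun y => ρ (y, t) ^ γ) :=
        funext fun x => pd_sub_const 1 i
      rw [← hsub]
      exact ibp i (fun y => ρ (y, t) ^ γ - 1) (fun x => timeDeriv (fun p => u p i) x t)
        (hPd.sub_const 1) ((htdus i).differentiable (by simp))
        (by rw [hsub]; exact hpdPc i) (hpdtduc i)
        (fun x k => by simpa using hPper x k) (htduper i)
    rw [Finset.sum_congr rfl fun i _ => step i, Finset.sum_neg_distrib,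
      ← t3_sum _ (fun i => (hPc.fun_sub continuous_const).fun_mul (hpdtduc i))]
    exact congrArg Neg.neg (t3_congr fun x => (Finset.mul_sum _ _ _).symm)
  -- q3 : use the mass equation
  have hq3c1 : Continuous fun x =>
      ∑ j, pd j (fun y => ρ (y, t) ^ γ) x * (u (x, t) j * divergence (fun y => u (y, t)) x) :=
    continuous_finset_sum _ fun j _ => (hpdPc j).fun_mul ((hUcont j).fun_mul hdvgc)
  have hq3c2 : Continuous fun x =>
      (ρ (x, t) * (γ * ρ (x, t) ^ (γ - 1))) * (divergence (fun y => u (y, t)) x) ^ 2 :=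
    (hR.continuous.fun_mul (continuous_const.fun_mul
      ((Real.continuous_rpow_const hγ1).comp hR.continuous))).fun_mul (hdvgc.fun_pow 2)
  have hq3 : (∫ x in T3,
      (γ * ρ (x, t) ^ (γ - 1) * timeDeriv ρ x t) * divergence (fun y => u (y, t)) x)
      = -(∫ x in T3, ∑ j, pd j (fun y => ρ (y, t) ^ γ) x *
            (u (x, t) j * divergence (fun y => u (y, t)) x))
        + -(∫ x in T3, (ρ (x, t) * (γ * ρ (x, t) ^ (γ - 1))) *
            (divergence (fun y => u (y, t)) x) ^ 2) := by
    have hpt : ∀ x : Sp,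
        (γ * ρ (x, t) ^ (γ - 1) * timeDeriv ρ x t) * divergence (fun y => u (y, t)) x
        = -(∑ j, pd j (fun y => ρ (y, t) ^ γ) x *
              (u (x, t) j * divergence (fun y => u (y, t)) x))
          + -((ρ (x, t) * (γ * ρ (x, t) ^ (γ - 1))) * (divergence (fun y => u (y, t)) x) ^ 2) := by
      intro x
      rw [hmass' x]
      simp only [hpdP, hdvg, Fin.sum_univ_three]
      ring
    rw [t3_congr hpt, t3_add _ _ hq3c1.fun_neg hq3c2.fun_neg, integral_neg, integral_neg]
  -- q4 : integration by parts for the pressure transport term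
  have hq4 : (∫ x in T3, ∑ j, pd j (fun y => ρ (y, t) ^ γ) x *
        (u (x, t) j * divergence (fun y => u (y, t)) x))
      = -(∫ x in T3, ρ (x, t) ^ γ * (divergence (fun y => u (y, t)) x) ^ 2)
        + -(∫ x in T3, ρ (x, t) ^ γ *
            ∑ j, u (x, t) j * pd j (divergence fun y => u (y, t)) x) := by
    rw [t3_sum _ (fun j => (hpdPc j).fun_mul ((hUcont j).fun_mul hdvgc))]
    have step : ∀ j : Fin 3, (∫ x in T3, pd j (fun y => ρ (y, t) ^ γ) x *
          (u (x, t) j * divergence (fun y => u (y, t)) x))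
        = -∫ x in T3, ρ (x, t) ^ γ *
            (pd j (fun y => u (y, t) j) x * divergence (fun y => u (y, t)) x
              + u (x, t) j * pd j (divergence fun y => u (y, t)) x) := by
      intro j
      have hg : pd j (fun x => u (x, t) j * divergence (fun y => u (y, t)) x)
          = fun x => pd j (fun y => u (y, t) j) x * divergence (fun y => u (y, t)) x
              + u (x, t) j * pd j (divergence fun y => u (y, t)) x :=
        funext fun x => pd_mul (hUdiff j x) (hdvgs.differentiable (by simp) x) j
      have hibp := ibp j (fun y => ρ (y, t) ^ γ)
        (fun x => u (x, t) j * divergence (fun y => u (y, t)) x)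
        hPd ((hUdiff j).mul (hdvgs.differentiable (by simp))) (hpdPc j)
        (by rw [hg]; exact ((hpdUc j j).fun_mul hdvgc).fun_add ((hUcont j).fun_mul (hpddvgc j)))
        hPper (fun x k => congrArg₂ (· * ·) (hUperT j x k) (hdvgper x k))
      rw [hibp]
      exact congrArg Neg.neg (t3_congr fun x => by rw [hg])
    rw [Finset.sum_congr rfl fun j _ => step j, Finset.sum_neg_distrib,
      ← t3_sum _ (fun j => hPc.fun_mul (((hpdUc j j).fun_mul hdvgc).fun_add ((hUcont j).fun_mul (hpddvgc j))))]
    rw [show (∫ x in T3, ∑ j, ρ (x, t) ^ γ *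
          (pd j (fun y => u (y, t) j) x * divergence (fun y => u (y, t)) x
            + u (x, t) j * pd j (divergence fun y => u (y, t)) x))
        = (∫ x in T3, ρ (x, t) ^ γ * (divergence (fun y => u (y, t)) x) ^ 2)
          + ∫ x in T3, ρ (x, t) ^ γ *
              ∑ j, u (x, t) j * pd j (divergence fun y => u (y, t)) x from by
      rw [← t3_add _ _ (hPc.fun_mul (hdvgc.fun_pow 2)) (hPc.fun_mul (continuous_finset_sum _ fun j _ =>
        (hUcont j).fun_mul (hpddvgc j)))]
      refine t3_congr fun x => ?_
      simp only [hdvg, Fin.sum_univ_three]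
      ring]
    rw [neg_add]
  -- q5 : integration by parts for the convective term
  have hmix : ∀ (j : Fin 3) (x : Sp), pd j (divergence fun y => u (y, t)) x
      = ∑ i, pd i (pd j fun y => u (y, t) i) x := by
    intro j x
    rw [hdvg, pd_sum Finset.univ _ (fun i _ => ((hpdUs i i).differentiable (by simp)).differentiableAt) j]
    exact Finset.sum_congr rfl fun i _ => pd_comm (hU i) j i x
  have hq5 : (∫ x in T3, ∑ i, ∑ j, pd i (fun y => ρ (y, t) ^ γ) x *
        (u (x, t) j * pd j (fun y => u (y, t) i) x))
      = -(∫ x in T3, ρ (x, t) ^ γ * ∑ i, ∑ j,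
            pd j (fun y => u (y, t) i) x * pd i (fun y => u (y, t) j) x)
        + -(∫ x in T3, ρ (x, t) ^ γ *
            ∑ j, u (x, t) j * pd j (divergence fun y => u (y, t)) x) := by
    rw [t3_sum _ (fun i => continuous_finset_sum _ fun j _ =>
      (hpdPc i).fun_mul ((hUcont j).fun_mul (hpdUc i j)))]
    have inner : ∀ i : Fin 3, (∫ x in T3, ∑ j, pd i (fun y => ρ (y, t) ^ γ) x *
          (u (x, t) j * pd j (fun y => u (y, t) i) x))
        = ∑ j, ∫ x in T3, pd i (fun y => ρ (y, t) ^ γ) x *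
            (u (x, t) j * pd j (fun y => u (y, t) i) x) :=
      fun i => t3_sum _ (fun j => (hpdPc i).fun_mul ((hUcont j).fun_mul (hpdUc i j)))
    rw [Finset.sum_congr rfl fun i _ => inner i]
    have step : ∀ i j : Fin 3, (∫ x in T3, pd i (fun y => ρ (y, t) ^ γ) x *
          (u (x, t) j * pd j (fun y => u (y, t) i) x))
        = -∫ x in T3, ρ (x, t) ^ γ *
            (pd i (fun y => u (y, t) j) x * pd j (fun y => u (y, t) i) x
              + u (x, t) j * pd i (pd j fun y => u (y, t) i) x) := by
      intro i j
      have hg : pd i (fun x => u (x, t) j * pd j (fun y => u (y, t) i) x)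
          = fun x => pd i (fun y => u (y, t) j) x * pd j (fun y => u (y, t) i) x
              + u (x, t) j * pd i (pd j fun y => u (y, t) i) x :=
        funext fun x => pd_mul (hUdiff j x) (((hpdUs i j).differentiable (by simp)) x) i
      have hibp := ibp i (fun y => ρ (y, t) ^ γ)
        (fun x => u (x, t) j * pd j (fun y => u (y, t) i) x)
        hPd ((hUdiff j).mul ((hpdUs i j).differentiable (by simp))) (hpdPc i)
        (by
          rw [hg]
          exact ((hpdUc j i).fun_mul (hpdUc i j)).fun_add
            ((hUcont j).fun_mul (continuous_pd ((hpdUs i j).of_le (by simp)) i)))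
        hPper (fun x k => congrArg₂ (· * ·) (hUperT j x k) (hpdUper i j x k))
      rw [hibp]
      exact congrArg Neg.neg (t3_congr fun x => by rw [hg])
    rw [Finset.sum_congr rfl fun i _ => Finset.sum_congr rfl fun j _ => step i j]
    have hc5 : ∀ i j : Fin 3, Continuous fun x => ρ (x, t) ^ γ *
        (pd i (fun y => u (y, t) j) x * pd j (fun y => u (y, t) i) x
          + u (x, t) j * pd i (pd j fun y => u (y, t) i) x) :=
      fun i j => hPc.fun_mul (((hpdUc j i).fun_mul (hpdUc i j)).fun_add
        ((hUcont j).fun_mul (continuous_pd ((hpdUs i j).of_le (by simp)) i)))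
    rw [Finset.sum_congr rfl fun i (_ : i ∈ Finset.univ) => Finset.sum_neg_distrib _,
      Finset.sum_neg_distrib]
    rw [Finset.sum_congr rfl fun i (_ : i ∈ Finset.univ) =>
      (t3_sum _ (fun j => hc5 i j)).symm]
    rw [← t3_sum _ (fun i => continuous_finset_sum _ fun j _ => hc5 i j)]
    rw [show (∫ x in T3, ∑ i, ∑ j, ρ (x, t) ^ γ *
          (pd i (fun y => u (y, t) j) x * pd j (fun y => u (y, t) i) x
            + u (x, t) j * pd i (pd j fun y => u (y, t) i) x))
        = (∫ x in T3, ρ (x, t) ^ γ * ∑ i, ∑ j,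
            pd j (fun y => u (y, t) i) x * pd i (fun y => u (y, t) j) x)
          + ∫ x in T3, ρ (x, t) ^ γ *
              ∑ j, u (x, t) j * pd j (divergence fun y => u (y, t)) x from by
      rw [← t3_add _ _ (hPc.fun_mul (continuous_finset_sum _ fun i _ =>
        continuous_finset_sum _ fun j _ => (hpdUc i j).fun_mul (hpdUc j i)))
        (hPc.fun_mul (continuous_finset_sum _ fun j _ => (hUcont j).fun_mul (hpddvgc j)))]
      refine t3_congr fun x => ?_
      simp only [hmix, Fin.sum_univ_three]
      ring]
    rw [neg_add]
  -- q6 : split the right-hand side integral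
  have hA5c : Continuous fun x => ρ (x, t) ^ γ * ∑ i, ∑ j,
      pd j (fun y => u (y, t) i) x * pd i (fun y => u (y, t) j) x :=
    hPc.fun_mul (continuous_finset_sum _ fun i _ =>
      continuous_finset_sum _ fun j _ => (hpdUc i j).fun_mul (hpdUc j i))
  have hq6 : (∫ x in T3,
        (-(ρ (x, t) * (γ * ρ (x, t) ^ (γ - 1))) * (divergence (fun y => u (y, t)) x) ^ 2
          + ρ (x, t) ^ γ * ((divergence (fun y => u (y, t)) x) ^ 2
            - ∑ i, ∑ j, pd j (fun y => u (y, t) i) x * pd i (fun y => u (y, t) j) x)))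
      = -(∫ x in T3, (ρ (x, t) * (γ * ρ (x, t) ^ (γ - 1))) *
            (divergence (fun y => u (y, t)) x) ^ 2)
        + ((∫ x in T3, ρ (x, t) ^ γ * (divergence (fun y => u (y, t)) x) ^ 2)
          + -(∫ x in T3, ρ (x, t) ^ γ * ∑ i, ∑ j,
              pd j (fun y => u (y, t) i) x * pd i (fun y => u (y, t) j) x)) := by
    rw [t3_congr (g := fun x =>
      -((ρ (x, t) * (γ * ρ (x, t) ^ (γ - 1))) * (divergence (fun y => u (y, t)) x) ^ 2)
        + (ρ (x, t) ^ γ * (divergence (fun y => u (y, t)) x) ^ 2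
          + -(ρ (x, t) ^ γ * ∑ i, ∑ j,
              pd j (fun y => u (y, t) i) x * pd i (fun y => u (y, t) j) x)))
      (fun x => by ring)]
    rw [t3_add _ _ hq3c2.fun_neg ((hPc.fun_mul (hdvgc.fun_pow 2)).fun_add hA5c.fun_neg),
      t3_add _ _ (hPc.fun_mul (hdvgc.fun_pow 2)) hA5c.fun_neg, integral_neg, integral_neg]
  -- q0 : split the left-hand side
  have hq0 : (∫ x in T3, ∑ i, pd i (fun y => ρ (y, t) ^ γ - 1) x *
        (timeDeriv (fun p => u p i) x t + ∑ j, u (x, t) j * pd j (fun y => u (y, t) i) x))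
      = (∫ x in T3, ∑ i, pd i (fun y => ρ (y, t) ^ γ) x * timeDeriv (fun p => u p i) x t)
        + ∫ x in T3, ∑ i, ∑ j, pd i (fun y => ρ (y, t) ^ γ) x *
            (u (x, t) j * pd j (fun y => u (y, t) i) x) := by
    rw [← t3_add _ _ (continuous_finset_sum _ fun i _ => (hpdPc i).fun_mul (htduc i))
      (continuous_finset_sum _ fun i _ => continuous_finset_sum _ fun j _ =>
        (hpdPc i).fun_mul ((hUcont j).fun_mul (hpdUc i j)))]
    refine t3_congr fun x => ?_
    simp only [pd_sub_const, Fin.sum_univ_three]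
    ring
  rw [hq0, hderiv_eq]
  linarith [hq1, hq2, hq3, hq4, hq5, hq6]

/-- identity (3.19): for smooth `ρ ≥ 0`, `u` on the torus satisfying the
mass equation, with `P(ρ) = ρ^γ` and `P'(ρ) = γρ^{γ-1}`, for every `t ∈ (0,T)`:
`∫ ∇(P(ρ)-1) · (∂ₜu + (u·∇)u) dx
  = - d/dt ∫ (P(ρ)-1) div u dx
    + ∫ (-ρP'(ρ)(div u)² + P(ρ)((div u)² - Σᵢⱼ ∂ⱼuⁱ ∂ᵢuʲ)) dx`. -/
theorem pressure_work_identity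
    (γ T : ℝ) (hγ : 1 < γ) (hT : 0 < T)
    (ρ : Sp × ℝ → ℝ) (u : Sp × ℝ → Fin 3 → ℝ)
    (hρ : ContDiff ℝ (⊤ : ℕ∞) ρ) (hu : ContDiff ℝ (⊤ : ℕ∞) u)
    (hρper : ∀ t : ℝ, SpacePeriodic fun x => ρ (x, t))
    (huper : ∀ (t : ℝ) (i : Fin 3), SpacePeriodic fun x => u (x, t) i)
    (hρnn : ∀ p, 0 ≤ ρ p)
    (hmass : ∀ (x : Sp), ∀ t ∈ Set.Icc (0:ℝ) T,
      timeDeriv ρ x t + divergence (fun y i => ρ (y, t) * u (y, t) i) x = 0) :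
    ∀ t ∈ Set.Ioo (0:ℝ) T,
      (∫ x in T3, ∑ i, pd i (fun y => ρ (y, t) ^ γ - 1) x *
          (timeDeriv (fun p => u p i) x t + ∑ j, u (x, t) j * pd j (fun y => u (y, t) i) x))
      = -(deriv (fun s => ∫ x in T3,
            (ρ (x, s) ^ γ - 1) * divergence (fun y => u (y, s)) x) t)
        + ∫ x in T3,
            (-(ρ (x, t) * (γ * ρ (x, t) ^ (γ - 1))) * (divergence (fun y => u (y, t)) x) ^ 2
              + ρ (x, t) ^ γ * ((divergence (fun y => u (y, t)) x) ^ 2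
                - ∑ i, ∑ j, pd j (fun y => u (y, t) i) x * pd i (fun y => u (y, t) j) x)) := by
  intro t ht
  exact core γ hγ t ρ u hρ hu hρper huper (fun x => hmass x t (Set.Ioo_subset_Icc_self ht))
end
end

section
/- Let η₁ > 0, η₅ > 0 and let g : [0,∞) → [0,∞) be measurable with ∫_0^∞ g(τ)² dτ < ∞. Then there exists a constant C > 0, depending only on η₁, η₅ and ∫_0^∞ g², such that for all t ≥ 0: ∫_0^t e^{−η₅ (t−τ)} (g(τ) + 1)^{3/2} e^{−(η₁/2) τ} dτ ≤ C ( e^{−(η₁/4) t} + e^{−(η₅/2) t} ). -/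
/-!
Since `(x + 1)^{3/2} ≤ 2x² + 2` for `x ≥ 0`, and since for `τ ≤ t/2` the kernel factor
`e^{-η₅(t-τ)}` is at most `e^{-(η₅/2)t}` while for `τ ≥ t/2` the factor `e^{-(η₁/2)τ}` is at most
`e^{-(η₁/4)t}`, the integrand is dominated by `2g²(e^{-(η₅/2)t} + e^{-(η₁/4)t})` plus the two
exponentials times a single decaying weight in `τ`. The `g²` part is bounded by `∫₀^∞ g²` and each
weight integrates to at most the reciprocal of its rate.
-/

open MeasureTheory Real Set

lemma add_one_rpow_three_halves_le {x : ℝ} (hx : 0 ≤ x) :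
    (x + 1) ^ ((3:ℝ)/2) ≤ 2 * x ^ 2 + 2 :=
  calc (x + 1) ^ ((3:ℝ)/2) ≤ (x + 1) ^ (2:ℝ) :=
        rpow_le_rpow_of_exponent_le (by linarith) (by norm_num)
    _ = (x + 1) ^ 2 := rpow_two _
    _ ≤ 2 * x ^ 2 + 2 := by nlinarith [sq_nonneg (x - 1)]

lemma exp_mul_exp_le_add (a b t τ : ℝ) (ha : 0 ≤ a) (hb : 0 ≤ b) :
    exp (-a * (t - τ)) * exp (-b * τ)
      ≤ exp (-(a/2) * t) * exp (-b * τ) + exp (-(b/2) * t) * exp (-a * (t - τ)) := by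
  rcases le_total τ (t/2) with h | h
  · have : exp (-a * (t - τ)) ≤ exp (-(a/2) * t) := exp_le_exp.mpr (by nlinarith)
    have := mul_le_mul_of_nonneg_right this (exp_pos (-b * τ)).le
    nlinarith [mul_pos (exp_pos (-(b/2) * t)) (exp_pos (-a * (t - τ)))]
  · have : exp (-b * τ) ≤ exp (-(b/2) * t) := exp_le_exp.mpr (by nlinarith)
    have := mul_le_mul_of_nonneg_left this (exp_pos (-a * (t - τ))).le
    nlinarith [mul_pos (exp_pos (-(a/2) * t)) (exp_pos (-b * τ))]

lemma exp_mul_add_one_rpow_mul_exp_le {a b t τ x : ℝ} (ha : 0 ≤ a) (hb : 0 ≤ b)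
    (hτ : τ ∈ Icc 0 t) (hx : 0 ≤ x) :
    exp (-a * (t - τ)) * (x + 1) ^ ((3:ℝ)/2) * exp (-b * τ)
      ≤ 2 * (exp (-(a/2) * t) + exp (-(b/2) * t)) * x ^ 2
        + 2 * (exp (-(a/2) * t) * exp (-b * τ) + exp (-(b/2) * t) * exp (-a * (t - τ))) := by
  set A := exp (-(a/2) * t)
  set B := exp (-(b/2) * t)
  set u := exp (-a * (t - τ))
  set v := exp (-b * τ)
  have hu : u ≤ 1 := exp_le_one_iff.mpr (by nlinarith [hτ.2])
  have hv : v ≤ 1 := exp_le_one_iff.mpr (by nlinarith [hτ.1])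
  have hsplit : u * v ≤ A * v + B * u := exp_mul_exp_le_add a b t τ ha hb
  have hweight : A * v + B * u ≤ A + B := by
    nlinarith [mul_le_mul_of_nonneg_left hv (exp_pos (-(a/2) * t)).le,
      mul_le_mul_of_nonneg_left hu (exp_pos (-(b/2) * t)).le]
  have huv : 0 ≤ u * v := by positivity
  calc u * (x + 1) ^ ((3:ℝ)/2) * v = (x + 1) ^ ((3:ℝ)/2) * (u * v) := by ring
    _ ≤ (2 * x ^ 2 + 2) * (u * v) :=
        mul_le_mul_of_nonneg_right (add_one_rpow_three_halves_le hx) huv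
    _ = 2 * x ^ 2 * (u * v) + 2 * (u * v) := by ring
    _ ≤ 2 * x ^ 2 * (A + B) + 2 * (A * v + B * u) := by
        gcongr
        exact hsplit.trans hweight
    _ = _ := by ring

lemma setIntegral_Ioc_exp_neg_mul_le {c : ℝ} (hc : 0 < c) (t : ℝ) :
    ∫ τ in Ioc 0 t, exp (-c * τ) ≤ 1 / c := by
  calc ∫ τ in Ioc 0 t, exp (-c * τ) ≤ ∫ τ in Ioi 0, exp (-c * τ) :=
        setIntegral_mono_set (integrableOn_exp_mul_Ioi (by linarith) 0)
          (.of_forall fun _ => (exp_pos _).le) Ioc_subset_Ioi_self.eventuallyLE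
    _ = 1 / c := by rw [integral_exp_mul_Ioi (by linarith)]; field_simp; simp

lemma setIntegral_Ioc_exp_neg_mul_sub_le {c : ℝ} (hc : 0 < c) (t : ℝ) :
    ∫ τ in Ioc 0 t, exp (-c * (t - τ)) ≤ 1 / c := by
  have hsplit : (fun τ => exp (-c * (t - τ))) = fun τ => exp (-c * t) * exp (c * τ) := by
    funext τ; rw [← exp_add]; ring_nf
  calc ∫ τ in Ioc 0 t, exp (-c * (t - τ)) ≤ ∫ τ in Iic t, exp (-c * (t - τ)) := by
        refine setIntegral_mono_set ?_ (.of_forall fun _ => (exp_pos _).le)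
          Ioc_subset_Iic_self.eventuallyLE
        rw [hsplit]; exact (integrableOn_exp_mul_Iic hc t).const_mul _
    _ = 1 / c := by
        rw [hsplit, integral_const_mul, integral_exp_mul_Iic hc, ← mul_div_assoc, ← exp_add]
        simp

lemma setIntegral_Ioc_exp_mul_add_one_rpow_mul_exp_le {a b : ℝ} (ha : 0 < a) (hb : 0 < b)
    {f : ℝ → ℝ} (hf0 : ∀ τ, 0 ≤ f τ) (hf : IntegrableOn (fun τ => f τ ^ 2) (Ioi 0)) (t : ℝ) :
    ∫ τ in Ioc 0 t, exp (-a * (t - τ)) * (f τ + 1) ^ ((3:ℝ)/2) * exp (-b * τ)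
      ≤ 2 * (exp (-(a/2) * t) + exp (-(b/2) * t)) * (∫ τ in Ioi 0, f τ ^ 2)
        + 2 * (exp (-(a/2) * t) / b + exp (-(b/2) * t) / a) := by
  set A := exp (-(a/2) * t)
  set B := exp (-(b/2) * t)
  have hint_b : IntegrableOn (fun τ => exp (-b * τ)) (Ioc 0 t) :=
    (continuous_exp.comp (continuous_const_mul _)).integrableOn_Ioc
  have hint_a : IntegrableOn (fun τ => exp (-a * (t - τ))) (Ioc 0 t) :=
    (continuous_exp.comp ((continuous_sub_left t).const_mul _)).integrableOn_Ioc
  have hint : IntegrableOn (fun τ => A * exp (-b * τ) + B * exp (-a * (t - τ))) (Ioc 0 t) :=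
    (hint_b.const_mul _).add (hint_a.const_mul _)
  have hint_f : IntegrableOn (fun τ => f τ ^ 2) (Ioc 0 t) := hf.mono_set Ioc_subset_Ioi_self
  calc ∫ τ in Ioc 0 t, exp (-a * (t - τ)) * (f τ + 1) ^ ((3:ℝ)/2) * exp (-b * τ)
      ≤ ∫ τ in Ioc 0 t,
          2 * (A + B) * f τ ^ 2 + 2 * (A * exp (-b * τ) + B * exp (-a * (t - τ))) := by
        refine integral_mono_of_nonneg ?_ ((hint_f.const_mul _).add (hint.const_mul _)) ?_
        · exact .of_forall fun τ => by have := hf0 τ; positivity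
        · filter_upwards [ae_restrict_mem measurableSet_Ioc] with τ hτ
          exact exp_mul_add_one_rpow_mul_exp_le ha.le hb.le (Ioc_subset_Icc_self hτ) (hf0 τ)
    _ = 2 * (A + B) * (∫ τ in Ioc 0 t, f τ ^ 2)
          + 2 * (A * (∫ τ in Ioc 0 t, exp (-b * τ))
            + B * ∫ τ in Ioc 0 t, exp (-a * (t - τ))) := by
        rw [integral_add (hint_f.const_mul _) (hint.const_mul _), integral_const_mul,
          integral_const_mul, integral_add (hint_b.const_mul _) (hint_a.const_mul _),
          integral_const_mul, integral_const_mul]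
    _ ≤ 2 * (A + B) * (∫ τ in Ioi 0, f τ ^ 2) + 2 * (A * (1 / b) + B * (1 / a)) := by
        gcongr 2 * (A + B) * ?_ + 2 * (A * ?_ + B * ?_)
        · exact setIntegral_mono_set hf (.of_forall fun _ => sq_nonneg _)
            Ioc_subset_Ioi_self.eventuallyLE
        · exact setIntegral_Ioc_exp_neg_mul_le hb t
        · exact setIntegral_Ioc_exp_neg_mul_sub_le ha t
    _ = _ := by simp only [mul_one_div]

theorem convolution_decay_estimate_general
    (η₁ η₅ : ℝ) (hη₁ : 0 < η₁) (hη₅ : 0 < η₅)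
    (g : ℝ → ℝ) (hgnn : ∀ τ, 0 ≤ g τ)
    (hgsq : IntegrableOn (fun τ => g τ ^ 2) (Set.Ioi (0:ℝ))) :
    ∃ C > (0:ℝ), ∀ t ≥ (0:ℝ),
      (∫ τ in (0:ℝ)..t,
          Real.exp (-η₅ * (t - τ)) * (g τ + 1) ^ ((3:ℝ)/2) * Real.exp (-(η₁/2) * τ))
        ≤ C * (Real.exp (-(η₁/4) * t) + Real.exp (-(η₅/2) * t)) := by
  set G := ∫ τ in Ioi 0, g τ ^ 2
  have hG : 0 ≤ G := setIntegral_nonneg measurableSet_Ioi fun _ _ => sq_nonneg _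
  refine ⟨2 * G + 4 / η₁ + 2 / η₅, by positivity, fun t ht => ?_⟩
  rw [intervalIntegral.integral_of_le ht]
  refine (setIntegral_Ioc_exp_mul_add_one_rpow_mul_exp_le hη₅ (half_pos hη₁) hgnn hgsq t).trans ?_
  rw [show η₁ / 2 / 2 = η₁ / 4 by ring]
  set E₁ := exp (-(η₅/2) * t)
  set E₂ := exp (-(η₁/4) * t)
  have hsplit : (2 * G + 4 / η₁ + 2 / η₅) * (E₂ + E₁)
      = 2 * (E₁ + E₂) * G + 2 * (E₁ / (η₁ / 2) + E₂ / η₅) + (4 / η₁ * E₂ + 2 / η₅ * E₁) := by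
    field_simp; ring
  rw [hsplit]
  exact le_add_of_nonneg_right (by positivity)

/-- the convolution-type decay estimate used in the proof of
Theorem 1.2.  If `η₁, η₅ > 0` and `g ≥ 0` is measurable and square-integrable on `(0,∞)`,
then there is `C > 0`, depending only on `η₁`, `η₅` and `∫₀^∞ g²`, such that for all `t ≥ 0`:
`∫₀ᵗ e^{-η₅(t-τ)} (g(τ)+1)^{3/2} e^{-(η₁/2)τ} dτ ≤ C (e^{-(η₁/4)t} + e^{-(η₅/2)t})`. -/
theorem convolution_decay_estimate
    (η₁ η₅ : ℝ) (hη₁ : 0 < η₁) (hη₅ : 0 < η₅)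
    (g : ℝ → ℝ) (hg : Measurable g) (hgnn : ∀ τ, 0 ≤ g τ)
    (hgsq : IntegrableOn (fun τ => g τ ^ 2) (Set.Ioi (0:ℝ))) :
    ∃ C > (0:ℝ), ∀ t ≥ (0:ℝ),
      (∫ τ in (0:ℝ)..t,
          Real.exp (-η₅ * (t - τ)) * (g τ + 1) ^ ((3:ℝ)/2) * Real.exp (-(η₁/2) * τ))
        ≤ C * (Real.exp (-(η₁/4) * t) + Real.exp (-(η₅/2) * t)) :=
  convolution_decay_estimate_general η₁ η₅ hη₁ hη₅ g hgnn hgsq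
end

section
/- Let a ∈ ℝ, κ > 0, 0 < δ < κ, and let h : [a,∞) → ℝ be continuous with h(a) ≥ −κ. Suppose that for all a ≤ s ≤ t, if h(τ) ∈ [−2κ, −κ] for every τ ∈ [s,t], then h(t) − h(s) ≥ −δ. Then h(t) > −2κ for all t ≥ a. -/
/-- the abstract continuity (bootstrap) argument used to derive a uniform
lower bound on the density (proof of (4.11)).  If `h` is continuous on `[a,∞)` with
`h(a) ≥ -κ`, and over any interval `[s,t]` spent entirely in the band `[-2κ, -κ]` it
decreases by at most `δ < κ`, then `h(t) > -2κ` for all `t ≥ a`. -/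
theorem bootstrap_lower_bound
    (a κ δ : ℝ) (hκ : 0 < κ) (hδ0 : 0 < δ) (hδκ : δ < κ)
    (h : ℝ → ℝ) (hcont : ContinuousOn h (Set.Ici a)) (ha : -κ ≤ h a)
    (hstep : ∀ s t : ℝ, a ≤ s → s ≤ t →
      (∀ τ ∈ Set.Icc s t, h τ ∈ Set.Icc (-(2 * κ)) (-κ)) → -δ ≤ h t - h s) :
    ∀ t ≥ a, -(2 * κ) < h t := by
  intro t hta
  by_contra hcon
  push_neg at hcon
  have hcont' : ContinuousOn h (Set.Icc a t) :=
    hcont.mono (Set.Icc_subset_Ici_self)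
  have hκκ : -(2 * κ) < -κ := by linarith
  -- A : set of points in [a,t] where h = -2κ
  set A : Set ℝ := Set.Icc a t ∩ h ⁻¹' {-(2 * κ)} with hAdef
  have hAclosed : IsClosed A :=
    hcont'.preimage_isClosed_of_isClosed isClosed_Icc isClosed_singleton
  have hAcomp : IsCompact A :=
    isCompact_Icc.of_isClosed_subset hAclosed Set.inter_subset_left
  have hAne : A.Nonempty := by
    have := intermediate_value_Icc' hta hcont'
      (Set.mem_Icc.2 ⟨hcon, by linarith⟩)
    obtain ⟨u, hu, hhu⟩ := this
    exact ⟨u, hu, hhu⟩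
  set t0 := sInf A with ht0def
  have ht0A : t0 ∈ A := hAcomp.sInf_mem hAne
  obtain ⟨ht0mem, ht0val⟩ := ht0A
  have ht0val : h t0 = -(2 * κ) := ht0val
  have hat0 : a ≤ t0 := ht0mem.1
  have ht0t : t0 ≤ t := ht0mem.2
  -- on [a, t0), h > -2κ
  have hbefore : ∀ u, a ≤ u → u < t0 → -(2 * κ) < h u := by
    intro u hau hut0
    by_contra hle
    push_neg at hle
    have hcu : ContinuousOn h (Set.Icc a u) :=
      hcont.mono Set.Icc_subset_Ici_self
    obtain ⟨v, hv, hhv⟩ := intermediate_value_Icc' hau hcu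
      (Set.mem_Icc.2 ⟨hle, by linarith⟩)
    have hvA : v ∈ A := ⟨⟨hv.1, le_trans hv.2 (le_trans hut0.le ht0t)⟩, hhv⟩
    have : t0 ≤ v := csInf_le hAcomp.bddBelow hvA
    linarith [hv.2]
  -- B : last time in [a, t0] where h ≥ -κ
  set B : Set ℝ := Set.Icc a t0 ∩ h ⁻¹' Set.Ici (-κ) with hBdef
  have hcont0 : ContinuousOn h (Set.Icc a t0) := hcont.mono Set.Icc_subset_Ici_self
  have hBclosed : IsClosed B :=
    hcont0.preimage_isClosed_of_isClosed isClosed_Icc isClosed_Ici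
  have hBcomp : IsCompact B :=
    isCompact_Icc.of_isClosed_subset hBclosed Set.inter_subset_left
  have hBne : B.Nonempty := ⟨a, ⟨le_refl a, hat0⟩, ha⟩
  set s0 := sSup B with hs0def
  have hs0B : s0 ∈ B := hBcomp.sSup_mem hBne
  have has0 : a ≤ s0 := hs0B.1.1
  have hs0t0 : s0 ≤ t0 := hs0B.1.2
  have hs0val : -κ ≤ h s0 := hs0B.2
  have hs0lt : s0 < t0 := by
    rcases lt_or_eq_of_le hs0t0 with hlt | heq
    · exact hlt
    · exfalso; rw [heq] at hs0val; rw [ht0val] at hs0val; linarith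
  -- h s0 = -κ
  have hs0eq : h s0 = -κ := by
    by_contra hne
    have hgt : -κ < h s0 := lt_of_le_of_ne hs0val (Ne.symm hne)
    have hcs : ContinuousOn h (Set.Icc s0 t0) := by
      apply hcont.mono
      intro x hx; exact le_trans has0 hx.1
    obtain ⟨v, hv, hhv⟩ := intermediate_value_Icc' hs0t0 hcs
      (Set.mem_Icc.2 ⟨by rw [ht0val]; linarith, hgt.le⟩)
    have hvB : v ∈ B := ⟨⟨le_trans has0 hv.1, hv.2⟩, le_of_eq hhv.symm⟩
    have hvle : v ≤ s0 := le_csSup hBcomp.bddAbove hvB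
    have : v = s0 := le_antisymm hvle hv.1
    rw [this] at hhv; exact hne hhv
  -- apply hstep on [s0, t0]
  have hband : ∀ τ ∈ Set.Icc s0 t0, h τ ∈ Set.Icc (-(2 * κ)) (-κ) := by
    intro τ hτ
    constructor
    · rcases lt_or_eq_of_le hτ.2 with hlt | heq
      · exact (hbefore τ (le_trans has0 hτ.1) hlt).le
      · rw [heq, ht0val]
    · rcases lt_or_eq_of_le hτ.1 with hlt | heq
      · by_contra hgt
        push_neg at hgt
        have hτB : τ ∈ B := ⟨⟨le_trans has0 hτ.1, hτ.2⟩, hgt.le⟩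
        have : τ ≤ s0 := le_csSup hBcomp.bddAbove hτB
        linarith
      · rw [← heq, hs0eq]
  have := hstep s0 t0 has0 hs0t0 hband
  rw [ht0val, hs0eq] at this
  linarith
end
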